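/- Let S be a real symmetric N×N matrix admitting an orthonormal eigenbasis ψ₁,…,ψ_N with eigenvalues 1 = λ₁ > λ₂ ≥ ⋯ ≥ λ_N > −1, and let λ = max(|λ₂|, |λ_N|) < 1. Then every diagonal entry of the Moore–Penrose pseudoinverse of I − S² satisfies 0 ≤ ((I − S²)†)_{ii} ≤ 1/(1 − λ²) for all i ∈ {1,…,N}. -/

import Mathlib

/-!
Writing `U` for the orthogonal matrix whose rows are the eigenvectors `ψ k`, the matrix
`I - S²` is `Uᵀ diag(1 - λ_k²) U`, and its pseudoinverse is `Uᵀ diag((1 - λ_k²)⁻¹) U`, where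
`0⁻¹ = 0` takes care of the kernel direction `ψ₁`. Hence `((I - S²)†)_{ii} = ∑_k (1 - λ_k²)⁻¹ ψ_k(i)²`
is a convex combination of the numbers `(1 - λ_k²)⁻¹ ∈ [0, 1/(1 - λ²)]`, the weights `ψ_k(i)²`
summing to `1` because the columns of an orthogonal matrix are unit vectors.
-/

open Matrix

/-- `P` is the Moore–Penrose pseudoinverse of `M`. -/
def IsMoorePenrose {n : Type*} [Fintype n] [DecidableEq n]
    (M P : Matrix n n ℝ) : Prop :=
  M * P * M = M ∧ P * M * P = P ∧ (M * P)ᵀ = M * P ∧ (P * M)ᵀ = P * M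

theorem IsMoorePenrose.unique {n : Type*} [Fintype n] [DecidableEq n] {M P₁ P₂ : Matrix n n ℝ}
    (h₁ : IsMoorePenrose M P₁) (h₂ : IsMoorePenrose M P₂) : P₁ = P₂ := by
  obtain ⟨a₁, b₁, c₁, d₁⟩ := h₁
  obtain ⟨a₂, b₂, c₂, d₂⟩ := h₂
  have hMP : M * P₁ = M * P₂ :=
    calc M * P₁ = (M * P₂) * (M * P₁) := by rw [← Matrix.mul_assoc, a₂]
      _ = ((M * P₁) * (M * P₂))ᵀ := by rw [transpose_mul, c₁, c₂]
      _ = M * P₂ := by rw [← Matrix.mul_assoc, a₁, c₂]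
  have hPM : P₁ * M = P₂ * M :=
    calc P₁ * M = (P₁ * M) * (P₂ * M) := by rw [Matrix.mul_assoc P₁, ← Matrix.mul_assoc M, a₂]
      _ = ((P₂ * M) * (P₁ * M))ᵀ := by rw [transpose_mul, d₁, d₂]
      _ = P₂ * M := by rw [Matrix.mul_assoc P₂, ← Matrix.mul_assoc M, a₁, d₂]
  calc P₁ = P₁ * (M * P₂) := by rw [← hMP, ← Matrix.mul_assoc, b₁]
    _ = P₂ := by rw [← Matrix.mul_assoc, hPM, b₂]

section OrthogonalConj

variable {n : Type*} [Fintype n] [DecidableEq n] {U : Matrix n n ℝ}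

theorem transpose_mul_diagonal_mul_transpose (U : Matrix n n ℝ) (d : n → ℝ) :
    (Uᵀ * diagonal d * U)ᵀ = Uᵀ * diagonal d * U := by
  rw [transpose_mul, transpose_mul, diagonal_transpose, transpose_transpose, Matrix.mul_assoc]

theorem transpose_mul_diagonal_mul_mul (hU : U * Uᵀ = 1) (d e : n → ℝ) :
    (Uᵀ * diagonal d * U) * (Uᵀ * diagonal e * U) = Uᵀ * diagonal (d * e) * U := by
  calc (Uᵀ * diagonal d * U) * (Uᵀ * diagonal e * U)
      = Uᵀ * diagonal d * (U * Uᵀ) * diagonal e * U := by simp only [Matrix.mul_assoc]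
    _ = Uᵀ * diagonal (d * e) * U := by
      rw [hU, Matrix.mul_one, Matrix.mul_assoc (Uᵀ), diagonal_mul_diagonal]; rfl

/-- In `ℝ`, `0⁻¹ = 0`, so `d⁻¹` is the pseudoinverse of `diagonal d` even where `d` vanishes. -/
theorem isMoorePenrose_transpose_mul_diagonal_mul (hU : U * Uᵀ = 1) (d : n → ℝ) :
    IsMoorePenrose (Uᵀ * diagonal d * U) (Uᵀ * diagonal d⁻¹ * U) := by
  have hdd : d * d⁻¹ * d = d := funext fun k => mul_inv_mul_cancel (d k)
  have hd'd : d⁻¹ * d * d⁻¹ = d⁻¹ := funext fun k => by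
    simpa using mul_inv_mul_cancel (d k)⁻¹
  simp only [IsMoorePenrose, transpose_mul_diagonal_mul_mul hU, hdd, hd'd,
    transpose_mul_diagonal_mul_transpose, and_self]

theorem eq_transpose_mul_diagonal_mul_of_mulVec_eq_smul (hU : U * Uᵀ = 1) {M : Matrix n n ℝ}
    {d : n → ℝ} (hM : ∀ k, M *ᵥ U k = d k • U k) : M = Uᵀ * diagonal d * U := by
  have hMU : M * Uᵀ = Uᵀ * diagonal d := by
    ext a k
    rw [mul_diagonal]
    simpa [mul_apply, mulVec, dotProduct, mul_comm] using congrFun (hM k) a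
  calc M = M * (Uᵀ * U) := by rw [mul_eq_one_comm.mp hU, Matrix.mul_one]
    _ = Uᵀ * diagonal d * U := by rw [← Matrix.mul_assoc, hMU]

theorem transpose_mul_diagonal_mul_apply_self (U : Matrix n n ℝ) (d : n → ℝ) (i : n) :
    (Uᵀ * diagonal d * U) i i = ∑ k, d k * U k i ^ 2 := by
  rw [mul_apply]
  simp only [mul_diagonal, transpose_apply]
  exact Finset.sum_congr rfl fun k _ => by ring

theorem sum_sq_apply_of_mul_transpose_eq_one (hU : U * Uᵀ = 1) (i : n) :
    ∑ k, U k i ^ 2 = 1 := by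
  have hUU : Uᵀ * U = 1 := mul_eq_one_comm.mp hU
  simpa [mul_apply, sq] using congrFun (congrFun hUU i) i

theorem transpose_mul_diagonal_mul_apply_self_mem_Icc (hU : U * Uᵀ = 1) {d : n → ℝ} {c : ℝ}
    (hd : ∀ k, d k ∈ Set.Icc 0 c) (i : n) : (Uᵀ * diagonal d * U) i i ∈ Set.Icc 0 c := by
  rw [transpose_mul_diagonal_mul_apply_self]
  refine ⟨Finset.sum_nonneg fun k _ => mul_nonneg (hd k).1 (sq_nonneg _), ?_⟩
  calc ∑ k, d k * U k i ^ 2 ≤ ∑ k, c * U k i ^ 2 :=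
        Finset.sum_le_sum fun k _ => mul_le_mul_of_nonneg_right (hd k).2 (sq_nonneg _)
    _ = c := by rw [← Finset.mul_sum, sum_sq_apply_of_mul_transpose_eq_one hU, mul_one]

end OrthogonalConj

theorem of_mul_transpose_eq_one {n : Type*} [Fintype n] [DecidableEq n] {ψ : n → n → ℝ}
    (horth : ∀ k l, ψ k ⬝ᵥ ψ l = if k = l then 1 else 0) : of ψ * (of ψ)ᵀ = 1 := by
  ext k l
  simpa [mul_apply, one_apply, dotProduct] using horth k l

theorem inv_one_sub_sq_mem_Icc {x c : ℝ} (hx : |x| ≤ c) (hc : c < 1) :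
    (1 - x ^ 2)⁻¹ ∈ Set.Icc 0 (1 - c ^ 2)⁻¹ := by
  have hx2 : x ^ 2 ≤ c ^ 2 := sq_le_sq' (abs_le.mp hx).1 (abs_le.mp hx).2
  have hc2 : 0 < 1 - c ^ 2 := by nlinarith [abs_nonneg x]
  exact ⟨inv_nonneg.mpr (by linarith), inv_anti₀ hc2 (by linarith)⟩

/-- for a real symmetric matrix `S` with orthonormal eigenbasis
and eigenvalues `1 = λ₁ > λ₂ ≥ ⋯ ≥ λ_N > −1` and `λ = max(|λ₂|,|λ_N|) < 1`,
every diagonal entry of `(I − S²)†` lies in `[0, 1/(1−λ²)]`. -/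
theorem stmt11 (N : ℕ) (hN : 2 ≤ N) (S : Matrix (Fin N) (Fin N) ℝ)
    (ψ : Fin N → (Fin N → ℝ)) (lam : Fin N → ℝ)
    (heig : ∀ k, S.mulVec (ψ k) = lam k • ψ k)
    (horth : ∀ k l, ψ k ⬝ᵥ ψ l = if k = l then 1 else 0)
    (hlam0 : lam ⟨0, by omega⟩ = 1)
    (hanti : ∀ k l : Fin N, k ≤ l → lam l ≤ lam k)
    (lamStar : ℝ)
    (hlamStar : lamStar = max |lam ⟨1, by omega⟩| |lam ⟨N - 1, by omega⟩|)
    (hlamStar1 : lamStar < 1)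
    (Q : Matrix (Fin N) (Fin N) ℝ)
    (hQ : IsMoorePenrose (1 - S ^ 2) Q)
    (i : Fin N) :
    0 ≤ Q i i ∧ Q i i ≤ 1 / (1 - lamStar ^ 2) := by
  have hU := of_mul_transpose_eq_one horth
  have heig' : ∀ k, S *ᵥ of ψ k = lam k • of ψ k := heig
  have hM : 1 - S ^ 2 = (of ψ)ᵀ * diagonal (fun k => 1 - lam k ^ 2) * of ψ :=
    eq_transpose_mul_diagonal_mul_of_mulVec_eq_smul hU fun k => by
      simp [sub_mulVec, sq, ← mulVec_mulVec, heig', mulVec_smul, sub_smul, smul_smul]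
  have hQ' := hQ.unique (hM ▸ isMoorePenrose_transpose_mul_diagonal_mul hU _)
  have hbound : ∀ k, (1 - lam k ^ 2)⁻¹ ∈ Set.Icc 0 (1 - lamStar ^ 2)⁻¹ := by
    intro k
    by_cases hk : k = ⟨0, by omega⟩
    · have hStar0 : 0 ≤ lamStar := hlamStar ▸ le_max_of_le_left (abs_nonneg _)
      simpa [hk, hlam0, abs_of_nonneg hStar0] using hlamStar1.le
    · refine inv_one_sub_sq_mem_Icc ?_ hlamStar1
      rw [hlamStar, max_comm]
      have := k.isLt
      refine abs_le_max_abs_abs (hanti _ _ ?_) (hanti _ _ ?_) <;>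
        simp only [Fin.le_def, Fin.ext_iff] at hk ⊢ <;> omega
  rw [hQ', one_div]
  exact transpose_mul_diagonal_mul_apply_self_mem_Icc hU hbound i
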